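/- arXiv:2409.01431 — 2 statements merged into one kernel-verified Lean document; each statement's English description precedes it below -/
import Mathlib

section
/- For all nonnegative integers ℓ, r, k, the spectral radius of the caterpillar C(ℓ, r, k) satisfies λ1(C(ℓ,r,k)) < √(√(k² + 4) + 2). -/
open Classical
attribute [local instance] Classical.propDecidable

noncomputable section

/-- The list of eigenvalues of the adjacency matrix of `G` (with multiplicity),
sorted in ascending order. -/
def eigList {V : Type*} [Fintype V] [DecidableEq V] (G : SimpleGraph V) : List ℝ :=
  (Finset.univ.val.map (Matrix.IsHermitian.eigenvalues
    (by
      rw [Matrix.IsHermitian]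
      ext i j
      simp [Matrix.conjTranspose_apply, G.adj_comm j i] : (G.adjMatrix ℝ).IsHermitian))).sort (· ≤ ·)

/-- `lam G k` is the `k`-th largest eigenvalue (1-indexed, with multiplicity)
of the adjacency matrix of `G`; so `lam G 1 = λ₁(G)`, `lam G 2 = λ₂(G)`, etc. -/
def lam {V : Type*} [Fintype V] [DecidableEq V] (G : SimpleGraph V) (k : ℕ) : ℝ :=
  (eigList G).getD (Fintype.card V - k) 0

/-- `Phi G x = det (x I - A(G))`: the characteristic polynomial of the adjacency
matrix of `G`, evaluated at `x`. -/
def Phi {V : Type*} [Fintype V] [DecidableEq V] (G : SimpleGraph V) (x : ℝ) : ℝ :=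
  ((G.adjMatrix ℝ).charpoly).eval x

/-- The graph `G - a` obtained by deleting the vertex `a`. -/
def delVert {V : Type*} (G : SimpleGraph V) (a : V) : SimpleGraph {v : V // v ≠ a} :=
  G.induce {v : V | v ≠ a}

/-- The path graph `P_m` on `m` vertices `0 - 1 - ⋯ - (m-1)`. -/
def pathG (m : ℕ) : SimpleGraph (Fin m) :=
  SimpleGraph.fromRel (fun i j => i.val + 1 = j.val)

/-- The caterpillar `C(ℓ,r,k)`: the path `v_0 v_1 ⋯ v_{ℓ+r}` together with `k`
pendant leaves attached at the vertex `v_ℓ`. -/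
def caterpillar (l r k : ℕ) : SimpleGraph (Fin (l + r + k + 1)) :=
  SimpleGraph.fromRel (fun i j =>
    (i.val + 1 = j.val ∧ j.val ≤ l + r) ∨ (i.val = l ∧ l + r < j.val))

/-- The star `K_{1,n-1}`: vertex `0` adjacent to all other vertices. -/
def starG (n : ℕ) : SimpleGraph (Fin n) :=
  SimpleGraph.fromRel (fun i _ => i.val = 0)

/-- The double star `T(n-3,1)`: adjacent vertices `u = 0`, `v = 1`, where `u` has
the `n - 3` pendant leaves `2, …, n-2` and `v` has the single pendant leaf `n-1`. -/
def doubleStar (n : ℕ) : SimpleGraph (Fin n) :=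
  SimpleGraph.fromRel (fun i j =>
    (i.val = 0 ∧ 1 ≤ j.val ∧ j.val ≤ n - 2) ∨ (i.val = 1 ∧ j.val = n - 1))

/-- The caterpillar `T((n-3)/2, 0, (n-3)/2)`: a path `0 - 1 - 2` with `(n-3)/2`
pendant leaves attached at `0` and `(n-3)/2` pendant leaves attached at `2`. -/
def doubleBroom (n : ℕ) : SimpleGraph (Fin n) :=
  SimpleGraph.fromRel (fun i j =>
    (i.val = 0 ∧ j.val = 1) ∨ (i.val = 1 ∧ j.val = 2) ∨
    (i.val = 0 ∧ 3 ≤ j.val ∧ j.val < 3 + (n - 3) / 2) ∨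
    (i.val = 2 ∧ 3 + (n - 3) / 2 ≤ j.val))

/-- `(G1,a) ∘ (G2,b)`: the disjoint union of `G1` and `G2` together with the edge `ab`. -/
def connectRoots {V1 V2 : Type*} (G1 : SimpleGraph V1) (G2 : SimpleGraph V2) (a : V1) (b : V2) :
    SimpleGraph (V1 ⊕ V2) where
  Adj x y := match x, y with
    | .inl u, .inl v => G1.Adj u v
    | .inr u, .inr v => G2.Adj u v
    | .inl u, .inr v => u = a ∧ v = b
    | .inr u, .inl v => u = b ∧ v = a
  symm := by
    refine ⟨?_⟩
    rintro (u | u) (v | v) h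
    · exact G1.adj_symm h
    · exact ⟨h.2, h.1⟩
    · exact ⟨h.2, h.1⟩
    · exact G2.adj_symm h
  loopless := by
    refine ⟨?_⟩
    rintro (u | u) h
    · exact G1.irrefl h
    · exact G2.irrefl h

/-- `(G1,a) ∘ v ∘ (G2,b)`: the disjoint union of `G1` and `G2` together with a new
vertex (`none`) joined to exactly `a` and `b`. -/
def connectViaVertex {V1 V2 : Type*} (G1 : SimpleGraph V1) (G2 : SimpleGraph V2)
    (a : V1) (b : V2) : SimpleGraph (Option (V1 ⊕ V2)) where
  Adj x y := match x, y with
    | some (.inl u), some (.inl v) => G1.Adj u v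
    | some (.inr u), some (.inr v) => G2.Adj u v
    | none, some (.inl u) => u = a
    | some (.inl u), none => u = a
    | none, some (.inr u) => u = b
    | some (.inr u), none => u = b
    | _, _ => False
  symm := by
    refine ⟨?_⟩
    rintro (_ | (u | u)) (_ | (v | v)) h
    all_goals first
      | exact h.elim
      | exact h
      | exact G1.adj_symm h
      | exact G2.adj_symm h
  loopless := by
    refine ⟨?_⟩
    rintro (_ | (u | u)) h
    · exact h.elim
    · exact G1.irrefl h
    · exact G2.irrefl h
/-!
A positive vector `x` with `A x ≤ c x`, strict somewhere, on a connected graph forces every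
eigenvalue into `(-c, c)`: compare an eigenvector with `x` at a vertex maximising `|v i| / x i`,
and propagate equality along edges. On `C(ℓ,r,k)` take `x = s ^ d` on the spine, `d` the distance
to `v_ℓ`, and `x = (s + s⁻¹)⁻¹` on the leaves. Since `s ^ (d - 1) + s ^ (d + 1) = (s + s⁻¹) s ^ d`,
this is a subsolution for `c = s + s⁻¹` as soon as the centre inequality `k ≤ s⁻² - s²` holds,
and it is strict at `v_0`, which misses a spine neighbour. Choosing `s⁻² - s² = k` gives
`(s + s⁻¹)² = √(k² + 4) + 2`.
-/

open Matrix

namespace SimpleGraph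

variable {V : Type*} {G : SimpleGraph V}

theorem Connected.forall_of_adj_closed (hG : G.Connected) {S : Set V} {i₀ : V} (hi₀ : i₀ ∈ S)
    (hS : ∀ i j, G.Adj i j → i ∈ S → j ∈ S) (j : V) : j ∈ S := by
  induction (reachable_iff_reflTransGen i₀ j).mp (hG.preconnected i₀ j) with
  | refl => exact hi₀
  | tail _ hadj ih => exact hS _ _ hadj ih

variable [Fintype V]

theorem abs_mul_abs_le_sum_neighborFinset_abs [DecidableRel G.Adj] {μ : ℝ} {v : V → ℝ}
    (hμ : G.adjMatrix ℝ *ᵥ v = μ • v) (i : V) :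
    |μ| * |v i| ≤ ∑ j ∈ G.neighborFinset i, |v j| := by
  rw [← abs_mul, ← smul_eq_mul, ← Pi.smul_apply, ← hμ, adjMatrix_mulVec_apply]
  exact Finset.abs_sum_le_sum_abs _ _

theorem abs_eigenvalue_lt_of_subsolution [DecidableRel G.Adj] (hG : G.Connected) {x : V → ℝ}
    (hx : ∀ i, 0 < x i) {c : ℝ} (hle : ∀ i, (G.adjMatrix ℝ *ᵥ x) i ≤ c * x i)
    (hlt : ∃ i, (G.adjMatrix ℝ *ᵥ x) i < c * x i)
    {μ : ℝ} {v : V → ℝ} (hv : v ≠ 0) (hμ : G.adjMatrix ℝ *ᵥ v = μ • v) : |μ| < c := by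
  have : Nonempty V := hG.nonempty
  obtain ⟨i₀, hi₀⟩ := Finite.exists_max fun i => |v i| / x i
  set M := |v i₀| / x i₀
  have hvM : ∀ j, |v j| ≤ M * x j := fun j => (div_le_iff₀ (hx j)).mp (hi₀ j)
  have hM : 0 < M := by
    obtain ⟨j, hj⟩ := Function.ne_iff.mp hv
    exact (div_pos (abs_pos.mpr hj) (hx j)).trans_le (hi₀ j)
  have hvi₀ : |v i₀| = M * x i₀ := by simp only [M, div_mul_cancel₀ _ (hx i₀).ne']
  have hchain : ∀ i, |μ| * |v i| ≤ ∑ j ∈ G.neighborFinset i, |v j| ∧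
      ∑ j ∈ G.neighborFinset i, |v j| ≤ M * (G.adjMatrix ℝ *ᵥ x) i := by
    refine fun i => ⟨abs_mul_abs_le_sum_neighborFinset_abs hμ i, ?_⟩
    rw [adjMatrix_mulVec_apply, Finset.mul_sum]
    exact Finset.sum_le_sum fun j _ => hvM j
  have hμc : |μ| ≤ c := by
    refine le_of_mul_le_mul_right ?_ (mul_pos hM (hx i₀))
    calc |μ| * (M * x i₀) = |μ| * |v i₀| := by rw [hvi₀]
      _ ≤ M * (G.adjMatrix ℝ *ᵥ x) i₀ := (hchain i₀).1.trans (hchain i₀).2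
      _ ≤ M * (c * x i₀) := by gcongr; exact hle i₀
      _ = c * (M * x i₀) := by ring
  refine hμc.lt_of_ne fun hμc => ?_
  have htight : ∀ i, |v i| = M * x i →
      (∀ j ∈ G.neighborFinset i, |v j| = M * x j) ∧ (G.adjMatrix ℝ *ᵥ x) i = c * x i := by
    intro i hi
    have h₁ := (hchain i).1
    have h₂ := (hchain i).2
    have h₃ : M * (G.adjMatrix ℝ *ᵥ x) i ≤ M * (c * x i) := by gcongr; exact hle i
    rw [hμc, hi] at h₁
    refine ⟨(Finset.sum_eq_sum_iff_of_le fun j _ => hvM j).mp ?_, by nlinarith⟩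
    rw [← Finset.mul_sum, ← G.adjMatrix_mulVec_apply i x]
    linarith
  have hall : ∀ i, |v i| = M * x i :=
    hG.forall_of_adj_closed (S := {i | |v i| = M * x i}) hvi₀ fun i j hij hi =>
      (htight i hi).1 j ((mem_neighborFinset G i j).mpr hij)
  obtain ⟨i, hi⟩ := hlt
  exact hi.ne (htight i (hall i)).2

variable [DecidableEq V]

theorem exists_adjMatrix_mulVec_eq_lam_smul [Nonempty V] (G : SimpleGraph V) {k : ℕ}
    (hk : 0 < k) : ∃ v : V → ℝ, v ≠ 0 ∧ G.adjMatrix ℝ *ᵥ v = lam G k • v := by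
  have hA : (G.adjMatrix ℝ).IsHermitian := G.isHermitian_adjMatrix ℝ
  have hlen : (eigList G).length = Fintype.card V := by simp [eigList]
  have hmem : lam G k ∈ eigList G := by
    have := Fintype.card_pos (α := V)
    rw [lam, List.getD_eq_getElem _ _ (by omega)]
    exact List.getElem_mem _
  obtain ⟨i, -, hi⟩ := Multiset.mem_map.mp ((Multiset.mem_sort _).mp hmem)
  refine ⟨_, fun h => ?_, hi ▸ hA.mulVec_eigenvectorBasis i⟩
  exact hA.eigenvectorBasis.orthonormal.ne_zero i (WithLp.ofLp_injective 2 h)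

theorem lam_lt_of_subsolution (hG : G.Connected) {x : V → ℝ} (hx : ∀ i, 0 < x i) {c : ℝ}
    (hle : ∀ i, (G.adjMatrix ℝ *ᵥ x) i ≤ c * x i) (hlt : ∃ i, (G.adjMatrix ℝ *ᵥ x) i < c * x i)
    {k : ℕ} (hk : 0 < k) : lam G k < c := by
  have : Nonempty V := hG.nonempty
  obtain ⟨v, hv, hμ⟩ := G.exists_adjMatrix_mulVec_eq_lam_smul hk
  exact (le_abs_self _).trans_lt (abs_eigenvalue_lt_of_subsolution hG hx hle hlt hv hμ)

end SimpleGraph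

theorem Fin.sum_univ_ite_val_eq {M : Type*} [AddCommMonoid M] (n a : ℕ) (f : ℕ → M) :
    ∑ j : Fin n, (if (j : ℕ) = a then f j else 0) = if a < n then f a else 0 := by
  simp only [Fin.sum_univ_eq_sum_range (fun j => if j = a then f j else 0), Finset.sum_ite_eq',
    Finset.mem_range]

section caterpillar

variable {l r k : ℕ}

theorem caterpillar_adj_iff (i j : Fin (l + r + k + 1)) :
    (caterpillar l r k).Adj i j ↔
      (j.val + 1 = i ∧ i.val ≤ l + r) ∨ (j.val = i + 1 ∧ j.val ≤ l + r) ∨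
        (i.val = l ∧ l + r < j) ∨ (j.val = l ∧ l + r < i) := by
  simp only [caterpillar, SimpleGraph.fromRel_adj, ne_eq, Fin.ext_iff]
  omega

theorem caterpillar_connected : (caterpillar l r k).Connected := by
  rw [SimpleGraph.connected_iff_exists_forall_reachable]
  have hspine : ∀ m (hm : m ≤ l + r),
      (caterpillar l r k).Reachable ⟨0, by omega⟩ ⟨m, by omega⟩ := by
    intro m hm
    induction m with
    | zero => rfl
    | succ m ih =>
      exact (ih (by omega)).trans
        ((caterpillar_adj_iff _ _).mpr (Or.inr (Or.inl ⟨rfl, hm⟩))).reachable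
  refine ⟨⟨0, by omega⟩, fun j => ?_⟩
  by_cases hj : j.val ≤ l + r
  · exact hspine j hj
  · exact (hspine l (by omega)).trans
      ((caterpillar_adj_iff _ _).mpr (Or.inr (Or.inr (Or.inl ⟨rfl, by omega⟩)))).reachable

theorem caterpillar_mulVec_apply (X : ℕ → ℝ) (i : Fin (l + r + k + 1)) :
    ((caterpillar l r k).adjMatrix ℝ *ᵥ fun j => X j) i =
      (if 1 ≤ i.val ∧ i.val ≤ l + r then X (i - 1) else 0) +
      (if i.val + 1 ≤ l + r then X (i + 1) else 0) +
      (if i.val = l then ∑ j ∈ Finset.range k, X (l + r + 1 + j) else 0) +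
      (if l + r < i.val then X l else 0) := by
  have hsplit : ∀ j : ℕ, (if (j + 1 = i ∧ i.val ≤ l + r) ∨ (j = i + 1 ∧ j ≤ l + r) ∨
        (i.val = l ∧ l + r < j) ∨ (j = l ∧ l + r < i) then X j else 0) =
      (if 1 ≤ i.val ∧ i.val ≤ l + r then (if j = i - 1 then X j else 0) else 0) +
      (if i.val + 1 ≤ l + r then (if j = i + 1 then X j else 0) else 0) +
      (if i.val = l then (if l + r < j then X j else 0) else 0) +
      (if l + r < i.val then (if j = l then X j else 0) else 0) := by
    intro j
    split_ifs <;> first | omega | ring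
  have hleaves : ∑ j : Fin (l + r + k + 1), (if l + r < j.val then X j else 0) =
      ∑ j ∈ Finset.range k, X (l + r + 1 + j) := by
    rw [Fin.sum_univ_eq_sum_range (fun j => if l + r < j then X j else 0),
      show l + r + k + 1 = l + r + 1 + k by ring, Finset.sum_range_add,
      Finset.sum_eq_zero fun j hj => if_neg (by rw [Finset.mem_range] at hj; omega), zero_add]
    exact Finset.sum_congr rfl fun j _ => if_pos (by omega)
  rw [SimpleGraph.adjMatrix_mulVec_apply, SimpleGraph.neighborFinset_eq_filter, Finset.sum_filter]
  simp only [caterpillar_adj_iff, hsplit, Finset.sum_add_distrib, Finset.sum_ite_irrel,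
    Finset.sum_const_zero, Fin.sum_univ_ite_val_eq, hleaves]
  have := i.isLt
  split_ifs <;> first | rfl | omega

end caterpillar

def caterpillarWeight (l r : ℕ) (s : ℝ) (m : ℕ) : ℝ :=
  if m ≤ l + r then s ^ Nat.dist m l else (s + s⁻¹)⁻¹

section caterpillarWeight

variable {l r : ℕ} {s : ℝ}

theorem caterpillarWeight_pos (hs : 0 < s) (m : ℕ) : 0 < caterpillarWeight l r s m := by
  unfold caterpillarWeight
  split_ifs <;> positivity

theorem caterpillarWeight_of_le {m : ℕ} (hm : m ≤ l + r) :
    caterpillarWeight l r s m = s ^ Nat.dist m l := if_pos hm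

theorem caterpillarWeight_of_lt {m : ℕ} (hm : l + r < m) :
    caterpillarWeight l r s m = (s + s⁻¹)⁻¹ := if_neg (by omega)

theorem ite_caterpillarWeight_le (hs : 0 ≤ s) {p : Prop} [Decidable p] {m e : ℕ}
    (h : p → m ≤ l + r ∧ Nat.dist m l = e) :
    (if p then caterpillarWeight l r s m else 0) ≤ s ^ e := by
  split_ifs with hp
  · obtain ⟨hm, rfl⟩ := h hp
    exact (caterpillarWeight_of_le hm).le
  · positivity

theorem sum_caterpillarWeight_leaves (k : ℕ) :
    ∑ j ∈ Finset.range k, caterpillarWeight l r s (l + r + 1 + j) = k * (s + s⁻¹)⁻¹ := by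
  rw [Finset.sum_congr rfl fun j _ => caterpillarWeight_of_lt (by omega), Finset.sum_const,
    Finset.card_range, nsmul_eq_mul]

theorem pow_add_pow_add_two (hs : s ≠ 0) (e : ℕ) :
    s ^ e + s ^ (e + 2) = (s + s⁻¹) * s ^ (e + 1) := by
  field_simp
  ring

theorem natCast_mul_inv_add_inv_le_inv_sub {k : ℕ} (hs : 0 < s) (hk : (k : ℝ) ≤ s⁻¹ ^ 2 - s ^ 2) :
    (k : ℝ) * (s + s⁻¹)⁻¹ ≤ s⁻¹ - s := by
  rw [← div_eq_mul_inv, div_le_iff₀ (by positivity)]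
  linarith

theorem spine_caterpillarWeight_le (hs : 0 ≤ s) {i : ℕ} (hi : i ≠ l) :
    (if 1 ≤ i ∧ i ≤ l + r then caterpillarWeight l r s (i - 1) else 0) +
      (if i + 1 ≤ l + r then caterpillarWeight l r s (i + 1) else 0) ≤
      s ^ (Nat.dist i l - 1) + s ^ (Nat.dist i l - 1 + 2) := by
  rcases hi.lt_or_gt with hil | hil
  · rw [add_comm (s ^ _)]
    gcongr <;> exact ite_caterpillarWeight_le hs fun _ => ⟨by omega, by unfold Nat.dist; omega⟩
  · gcongr <;> exact ite_caterpillarWeight_le hs fun _ => ⟨by omega, by unfold Nat.dist; omega⟩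

variable {k : ℕ}

theorem caterpillar_mulVec_weight_le (hs : 0 < s) (hk : (k : ℝ) ≤ s⁻¹ ^ 2 - s ^ 2)
    (i : Fin (l + r + k + 1)) :
    ((caterpillar l r k).adjMatrix ℝ *ᵥ fun j => caterpillarWeight l r s j) i ≤
      (s + s⁻¹) * caterpillarWeight l r s i := by
  rw [caterpillar_mulVec_apply, sum_caterpillarWeight_leaves]
  by_cases hil : i.val = l
  · have hB := ite_caterpillarWeight_le (l := l) (r := r) hs.le (p := 1 ≤ i.val ∧ i.val ≤ l + r)
      (m := i - 1) (e := 1) fun _ => ⟨by omega, by unfold Nat.dist; omega⟩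
    have hF := ite_caterpillarWeight_le (l := l) (r := r) hs.le (p := i.val + 1 ≤ l + r)
      (m := i + 1) (e := 1) fun _ => ⟨by omega, by unfold Nat.dist; omega⟩
    rw [if_pos hil, if_neg (show ¬ l + r < i.val by omega),
      caterpillarWeight_of_le (m := i) (by omega), hil, Nat.dist_self, pow_zero, mul_one]
    rw [hil, pow_one] at hB hF
    linarith [natCast_mul_inv_add_inv_le_inv_sub hs hk]
  by_cases hir : i.val ≤ l + r
  · rw [if_neg hil, if_neg (show ¬ l + r < i.val by omega), add_zero, add_zero,
      caterpillarWeight_of_le hir,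
      show Nat.dist i l = Nat.dist i l - 1 + 1 by unfold Nat.dist; omega,
      ← pow_add_pow_add_two hs.ne']
    exact spine_caterpillarWeight_le hs.le hil
  · rw [if_neg (show ¬ (1 ≤ i.val ∧ i.val ≤ l + r) by omega),
      if_neg (show ¬ i.val + 1 ≤ l + r by omega), if_neg hil, if_pos (by omega),
      caterpillarWeight_of_lt (m := i) (by omega), caterpillarWeight_of_le le_self_add,
      Nat.dist_self, pow_zero, mul_inv_cancel₀ (by positivity)]
    norm_num

theorem caterpillar_mulVec_weight_zero_lt (hs : 0 < s) (hk : (k : ℝ) ≤ s⁻¹ ^ 2 - s ^ 2) :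
    ((caterpillar l r k).adjMatrix ℝ *ᵥ fun j => caterpillarWeight l r s j) 0 <
      (s + s⁻¹) * caterpillarWeight l r s 0 := by
  have hF := ite_caterpillarWeight_le (l := l) (r := r) hs.le (p := 0 + 1 ≤ l + r)
    (m := 0 + 1) fun _ => ⟨by omega, rfl⟩
  rw [caterpillar_mulVec_apply, sum_caterpillarWeight_leaves, Fin.val_zero,
    if_neg (by omega), zero_add, if_neg (show ¬ l + r < 0 by omega), add_zero,
    caterpillarWeight_of_le (m := 0) (by omega)]
  rcases Nat.eq_zero_or_pos l with rfl | hl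
  · rw [if_pos rfl, Nat.dist_self, pow_zero, mul_one]
    rw [show Nat.dist (0 + 1) 0 = 1 from rfl, pow_one] at hF
    linarith [natCast_mul_inv_add_inv_le_inv_sub hs hk, inv_pos.mpr hs]
  · rw [show Nat.dist (0 + 1) l = l - 1 by unfold Nat.dist; omega] at hF
    rw [if_neg (show (0 : ℕ) ≠ l by omega), add_zero,
      show Nat.dist 0 l = l - 1 + 1 by unfold Nat.dist; omega, ← pow_add_pow_add_two hs.ne']
    linarith [pow_pos hs (l - 1 + 2)]

end caterpillarWeight

theorem lam_caterpillar_lt (l r : ℕ) {k : ℕ} {s : ℝ} (hs : 0 < s)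
    (hk : (k : ℝ) ≤ s⁻¹ ^ 2 - s ^ 2) : lam (caterpillar l r k) 1 < s + s⁻¹ :=
  SimpleGraph.lam_lt_of_subsolution caterpillar_connected (fun i => caterpillarWeight_pos hs i)
    (caterpillar_mulVec_weight_le hs hk) ⟨0, caterpillar_mulVec_weight_zero_lt hs hk⟩ one_pos

theorem exists_inv_sq_sub_sq_eq (a : ℝ) :
    ∃ s > 0, s⁻¹ ^ 2 - s ^ 2 = a ∧ s + s⁻¹ = √(√(a ^ 2 + 4) + 2) := by
  set D := √(a ^ 2 + 4)
  have hD : D ^ 2 = a ^ 2 + 4 := Real.sq_sqrt (by positivity)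
  have haD : a < D := by nlinarith [Real.sqrt_nonneg (a ^ 2 + 4)]
  have hDa : 0 < D + a := by nlinarith [Real.sqrt_nonneg (a ^ 2 + 4)]
  set s := √((D - a) / 2)
  have hs : 0 < s := Real.sqrt_pos.mpr (by linarith)
  have hs2 : s ^ 2 = (D - a) / 2 := Real.sq_sqrt (by linarith)
  have hsinv2 : s⁻¹ ^ 2 = (D + a) / 2 := by
    rw [inv_pow, hs2, inv_eq_iff_eq_inv, inv_div, div_eq_div_iff two_ne_zero hDa.ne']
    nlinarith
  refine ⟨s, hs, by rw [hsinv2, hs2]; ring, ?_⟩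
  rw [← Real.sqrt_sq (by positivity : 0 ≤ s + s⁻¹)]
  congr 1
  rw [add_sq, hs2, hsinv2, mul_assoc, mul_inv_cancel₀ hs.ne']
  ring

/-- `λ₁(C(ℓ,r,k)) < √(√(k² + 4) + 2)` for all nonnegative integers `ℓ, r, k`. -/
theorem stmt_7 (l r k : ℕ) :
    lam (caterpillar l r k) 1 < Real.sqrt (Real.sqrt ((k : ℝ) ^ 2 + 4) + 2) := by
  obtain ⟨s, hs, hsk, hsc⟩ := exists_inv_sq_sub_sq_eq k
  exact hsc ▸ lam_caterpillar_lt l r hs hsk.ge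

end
end

section
/- Let d ≥ 2 be even, n ≥ d + 1, and let T = C(d/2, d/2, n − d − 1) be the caterpillar obtained from a path v_0 … v_d by attaching n − d − 1 leaves at the middle vertex v_{d/2}. Then λ2(T) = λ1(P_{d/2}), the largest eigenvalue of the path on d/2 vertices. -/
open Classical
attribute [local instance] Classical.propDecidable

noncomputable section

/-!
Let `t = λ₁(P_l)` with `l = d/2`, and let `c = v_l` be the vertex carrying the leaves.
On the hyperplane `x c = 0` the adjacency form of the caterpillar splits into the forms of its two
arms, each a copy of `P_l`, since the leaves are then isolated; so the form is at most `t ‖x‖²`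
there, and the usual min-max argument allows at most one eigenvalue above `t`.
Conversely, a top eigenvector of `P_l` placed on each arm gives two vectors with disjoint,
non-adjacent supports; they span a plane on which the form is `t ‖x‖²`, which forces two
eigenvalues `≥ t`. Hence `λ₂ = t`.
-/

open Matrix Finset

theorem Matrix.mulVec_dotProduct {R m n : Type*} [CommSemiring R] [Fintype m] [Fintype n]
    (B : Matrix n m R) (v : m → R) (w : n → R) : (B *ᵥ v) ⬝ᵥ w = v ⬝ᵥ (Bᵀ *ᵥ w) := by
  rw [mulVec_transpose, dotProduct_comm, dotProduct_mulVec, dotProduct_comm]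

theorem dotProduct_comp_of_injective {R V W : Type*} [NonUnitalNonAssocSemiring R] [Fintype V]
    [Fintype W] {φ : W → V} (hφ : φ.Injective) {x y : V → R}
    (hx : ∀ v ∉ Set.range φ, x v = 0) : (x ∘ φ) ⬝ᵥ (y ∘ φ) = x ⬝ᵥ y :=
  Fintype.sum_of_injective φ hφ _ _ (fun v hv => by simp [hx v hv]) fun _ => rfl

theorem indicator_dotProduct_add_le {R V : Type*} [CommRing R] [LinearOrder R]
    [IsStrictOrderedRing R] [Fintype V] {S T : Set V} (hST : Disjoint S T) (x : V → R) :
    S.indicator x ⬝ᵥ S.indicator x + T.indicator x ⬝ᵥ T.indicator x ≤ x ⬝ᵥ x := by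
  simp only [dotProduct, ← sum_add_distrib]
  refine sum_le_sum fun v _ => ?_
  by_cases hS : v ∈ S
  · simp [hS, Set.disjoint_left.mp hST hS]
  · by_cases hT : v ∈ T <;> simp [hS, hT, mul_self_nonneg]

theorem sum_mul_sq_lt_mul_sum_sq {R n : Type*} [CommRing R] [LinearOrder R]
    [IsStrictOrderedRing R] [Fintype n] {d y : n → R} {t : R} (hy : y ≠ 0)
    (h : ∀ i, y i ≠ 0 → d i < t) : ∑ i, d i * y i ^ 2 < t * ∑ i, y i ^ 2 := by
  obtain ⟨i, hi⟩ := Function.ne_iff.mp hy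
  rw [mul_sum]
  refine sum_lt_sum (fun j _ => ?_) ⟨i, mem_univ i, ?_⟩
  · by_cases hj : y j = 0
    · simp [hj]
    · exact mul_le_mul_of_nonneg_right (h j hj).le (sq_nonneg _)
  · exact mul_lt_mul_of_pos_right (h i hi) (sq_pos_of_ne_zero hi)

theorem exists_mul_add_mul_eq_zero {R : Type*} [CommRing R] [Nontrivial R] (a b : R) :
    ∃ α β : R, (α ≠ 0 ∨ β ≠ 0) ∧ α * a + β * b = 0 := by
  by_cases h : a = 0 ∧ b = 0
  · exact ⟨1, 0, Or.inl one_ne_zero, by simp [h.1]⟩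
  · exact ⟨b, -a, by rw [neg_ne_zero]; tauto, by ring⟩

namespace Matrix.IsHermitian

variable {n : Type*} [Fintype n] [DecidableEq n] {A : Matrix n n ℝ} (hA : A.IsHermitian)

local notation "U" => (hA.eigenvectorUnitary : Matrix n n ℝ)

theorem transpose_eigenvectorUnitary_mul_self : Uᵀ * U = 1 := by
  simpa [star_eq_conjTranspose] using Unitary.coe_star_mul_self hA.eigenvectorUnitary

theorem eigenvectorUnitary_mul_transpose_self : U * Uᵀ = 1 := by
  simpa [star_eq_conjTranspose] using Unitary.coe_mul_star_self hA.eigenvectorUnitary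

theorem transpose_eigenvectorUnitary_mul_mul_self : Uᵀ * A * U = diagonal hA.eigenvalues := by
  simpa [Unitary.conjStarAlgAut_star_apply, star_eq_conjTranspose] using
    hA.conjStarAlgAut_star_eigenvectorUnitary

theorem eigenvectorUnitary_mulVec_transpose_mulVec (x : n → ℝ) : U *ᵥ (Uᵀ *ᵥ x) = x := by
  rw [mulVec_mulVec, hA.eigenvectorUnitary_mul_transpose_self, one_mulVec]

theorem dotProduct_mulVec_eigenvectorUnitary (y : n → ℝ) :
    (U *ᵥ y) ⬝ᵥ (A *ᵥ (U *ᵥ y)) = ∑ i, hA.eigenvalues i * y i ^ 2 := by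
  rw [mulVec_dotProduct, mulVec_mulVec, mulVec_mulVec,
    hA.transpose_eigenvectorUnitary_mul_mul_self]
  simp only [dotProduct, mulVec_diagonal]
  exact sum_congr rfl fun i _ => by ring

theorem dotProduct_self_eigenvectorUnitary (y : n → ℝ) :
    (U *ᵥ y) ⬝ᵥ (U *ᵥ y) = ∑ i, y i ^ 2 := by
  rw [mulVec_dotProduct, mulVec_mulVec, hA.transpose_eigenvectorUnitary_mul_self, one_mulVec]
  exact sum_congr rfl fun i _ => (sq _).symm

theorem eigenvalues_equivOfCardEq (j : Fin (Fintype.card n)) :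
    hA.eigenvalues (Fintype.equivOfCardEq (Fintype.card_fin _) j) = hA.eigenvalues₀ j := by
  simp [eigenvalues]

theorem dotProduct_mulVec_le {t : ℝ} (h : ∀ i, hA.eigenvalues i ≤ t) (x : n → ℝ) :
    x ⬝ᵥ (A *ᵥ x) ≤ t * (x ⬝ᵥ x) := by
  rw [← hA.eigenvectorUnitary_mulVec_transpose_mulVec x, dotProduct_mulVec_eigenvectorUnitary,
    dotProduct_self_eigenvectorUnitary, mul_sum]
  exact sum_le_sum fun i _ => mul_le_mul_of_nonneg_right (h i) (sq_nonneg _)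

theorem exists_dotProduct_mulVec_eq (i : n) :
    ∃ x : n → ℝ, x ≠ 0 ∧ x ⬝ᵥ (A *ᵥ x) = hA.eigenvalues i * (x ⬝ᵥ x) := by
  refine ⟨U *ᵥ Pi.single i 1, fun h => ?_, ?_⟩
  · simpa [h, Pi.single_apply] using hA.dotProduct_self_eigenvectorUnitary (Pi.single i 1)
  · rw [dotProduct_mulVec_eigenvectorUnitary, dotProduct_self_eigenvectorUnitary]
    simp [Pi.single_apply]

/-- Two eigenvalues above `t` would give a plane of eigenvectors, which meets the hyperplane
`x c = 0`. -/
theorem card_lt_eigenvalues_le_one {t : ℝ} (c : n)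
    (h : ∀ x : n → ℝ, x c = 0 → x ⬝ᵥ (A *ᵥ x) ≤ t * (x ⬝ᵥ x)) :
    #{i | t < hA.eigenvalues i} ≤ 1 := by
  refine card_le_one.mpr fun i hi j hj => by_contra fun hij => ?_
  simp only [mem_filter, mem_univ, true_and] at hi hj
  obtain ⟨α, β, hαβ, hc⟩ := exists_mul_add_mul_eq_zero (U c i) (U c j)
  set y : n → ℝ := Pi.single i α + Pi.single j β
  have hyi : y i = α := by simp [y, hij]
  have hyj : y j = β := by simp [y, Ne.symm hij]
  have hy : y ≠ 0 := fun h0 => by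
    rcases hαβ with hα | hβ
    · exact hα (hyi ▸ congrFun h0 i)
    · exact hβ (hyj ▸ congrFun h0 j)
  have hsupp : ∀ z, y z ≠ 0 → -hA.eigenvalues z < -t := fun z hz => by
    by_cases hzi : z = i
    · subst hzi; linarith
    by_cases hzj : z = j
    · subst hzj; linarith
    · simp [y, hzi, hzj] at hz
  have hle := h (U *ᵥ y) (by simp [y, mulVec_add, mulVec_single, ← hc])
  rw [dotProduct_mulVec_eigenvectorUnitary, dotProduct_self_eigenvectorUnitary] at hle
  have hlt := sum_mul_sq_lt_mul_sum_sq hy hsupp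
  simp only [neg_mul, sum_neg_distrib] at hlt
  linarith

/-- Dually, a plane on which the form is `≥ t` meets the span of the eigenvectors with
eigenvalue `< t` as soon as these have codimension at most one. -/
theorem two_le_card_le_eigenvalues {t : ℝ} {p q : n → ℝ} (hp : p ≠ 0) (hq : q ≠ 0)
    (hpq : p ⬝ᵥ q = 0) (h : ∀ α β : ℝ, t * ((α • p + β • q) ⬝ᵥ (α • p + β • q)) ≤
      (α • p + β • q) ⬝ᵥ (A *ᵥ (α • p + β • q))) :
    2 ≤ #{i | t ≤ hA.eigenvalues i} := by
  by_contra! hlt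
  have : Nonempty n := ⟨(Function.ne_iff.mp hp).choose⟩
  obtain ⟨i₀, hi₀⟩ := card_le_one_iff_subset_singleton.mp (Nat.le_of_lt_succ hlt)
  have hsmall : ∀ i ≠ i₀, hA.eigenvalues i < t := fun i hi => by
    by_contra! hti
    exact hi (mem_singleton.mp (hi₀ (by simpa using hti)))
  obtain ⟨α, β, hαβ, hc⟩ := exists_mul_add_mul_eq_zero ((Uᵀ *ᵥ p) i₀) ((Uᵀ *ᵥ q) i₀)
  have hle := h α β
  set x := α • p + β • q
  have hx : x ≠ 0 := by
    intro h0
    have hxp : x ⬝ᵥ p = α * (p ⬝ᵥ p) := by simp [x, add_dotProduct, dotProduct_comm q p, hpq]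
    have hxq : x ⬝ᵥ q = β * (q ⬝ᵥ q) := by simp [x, add_dotProduct, hpq]
    rw [h0, zero_dotProduct, eq_comm, mul_eq_zero, dotProduct_self_eq_zero] at hxp hxq
    tauto
  set y := Uᵀ *ᵥ x
  have hy : y ≠ 0 := fun h0 => hx <| by
    rw [← hA.eigenvectorUnitary_mulVec_transpose_mulVec x, show Uᵀ *ᵥ x = 0 from h0, mulVec_zero]
  have hyi₀ : y i₀ = 0 := by simp [y, x, mulVec_add, mulVec_smul, hc]
  rw [← hA.eigenvectorUnitary_mulVec_transpose_mulVec x, dotProduct_mulVec_eigenvectorUnitary,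
    dotProduct_self_eigenvectorUnitary] at hle
  have hlt := sum_mul_sq_lt_mul_sum_sq hy fun i hi => hsmall i (by rintro rfl; exact hi hyi₀)
  linarith

end Matrix.IsHermitian

namespace SimpleGraph

section QuadraticForm

variable {V : Type*} [Fintype V] {G : SimpleGraph V}

theorem dotProduct_adjMatrix_mulVec_eq_zero {a b : V → ℝ}
    (h : ∀ u v, G.Adj u v → a u = 0 ∨ b v = 0) : a ⬝ᵥ (G.adjMatrix ℝ *ᵥ b) = 0 := by
  refine sum_eq_zero fun u _ => ?_
  rw [adjMatrix_mulVec_apply, mul_sum]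
  refine sum_eq_zero fun v hv => ?_
  rcases h u v ((mem_neighborFinset G u v).mp hv) with h | h <;> simp [h]

theorem dotProduct_adjMatrix_mulVec_add {a b : V → ℝ}
    (h : ∀ u v, G.Adj u v → a u = 0 ∨ b v = 0) :
    (a + b) ⬝ᵥ (G.adjMatrix ℝ *ᵥ (a + b)) =
      a ⬝ᵥ (G.adjMatrix ℝ *ᵥ a) + b ⬝ᵥ (G.adjMatrix ℝ *ᵥ b) := by
  have hab := dotProduct_adjMatrix_mulVec_eq_zero h
  have hba := dotProduct_adjMatrix_mulVec_eq_zero (G := G) (a := b) (b := a)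
    fun u v huv => (h v u huv.symm).symm
  simp only [mulVec_add, dotProduct_add, add_dotProduct, hab, hba]
  ring

theorem Embedding.dotProduct_adjMatrix_mulVec_comp {W : Type*} [Fintype W] {H : SimpleGraph W}
    (φ : H ↪g G) {x : V → ℝ} (hx : ∀ v ∉ Set.range φ, x v = 0) :
    (x ∘ φ) ⬝ᵥ (H.adjMatrix ℝ *ᵥ (x ∘ φ)) = x ⬝ᵥ (G.adjMatrix ℝ *ᵥ x) := by
  have hrow : H.adjMatrix ℝ *ᵥ (x ∘ φ) = (G.adjMatrix ℝ *ᵥ x) ∘ φ := by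
    funext w
    refine Fintype.sum_of_injective φ φ.injective _ _ (fun v hv => by simp [hx v hv]) fun w' => ?_
    simp [adjMatrix_apply]
  rw [hrow, dotProduct_comp_of_injective φ.injective hx]

end QuadraticForm

section Eigenvalues

variable {V : Type*} [Fintype V] [DecidableEq V] (G : SimpleGraph V)

theorem eigList_eq_reverse :
    eigList G = (List.ofFn (G.isHermitian_adjMatrix ℝ).eigenvalues₀).reverse := by
  rw [eigList, ← Multiset.map_univ_val_equiv (Fintype.equivOfCardEq (Fintype.card_fin _)),
    Multiset.map_map]
  have : (G.isHermitian_adjMatrix ℝ).eigenvalues ∘ (Fintype.equivOfCardEq (Fintype.card_fin _))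
      = (G.isHermitian_adjMatrix ℝ).eigenvalues₀ :=
    funext (G.isHermitian_adjMatrix ℝ).eigenvalues_equivOfCardEq
  rw [this, Fin.univ_val_map, ← Multiset.coe_reverse, Multiset.coe_sort]
  apply List.mergeSort_of_pairwise
  rw [List.pairwise_reverse]
  simpa using ((G.isHermitian_adjMatrix ℝ).eigenvalues₀_antitone).sortedGE_ofFn.pairwise

theorem lam_eq_eigenvalues₀ {k : ℕ} (hk₀ : 1 ≤ k) (hk : k ≤ Fintype.card V) :
    lam G k = (G.isHermitian_adjMatrix ℝ).eigenvalues₀ ⟨k - 1, by omega⟩ := by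
  rw [lam, eigList_eq_reverse, List.getD_eq_getElem _ _ (by simp; omega), List.getElem_reverse,
    List.getElem_ofFn]
  congr 2
  simp; omega

theorem dotProduct_adjMatrix_mulVec_le_lam_one [Nonempty V] (x : V → ℝ) :
    x ⬝ᵥ (G.adjMatrix ℝ *ᵥ x) ≤ lam G 1 * (x ⬝ᵥ x) := by
  rw [G.lam_eq_eigenvalues₀ le_rfl Fintype.card_pos]
  refine (G.isHermitian_adjMatrix ℝ).dotProduct_mulVec_le (fun i => ?_) x
  rw [← (Fintype.equivOfCardEq (Fintype.card_fin _)).apply_symm_apply i,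
    IsHermitian.eigenvalues_equivOfCardEq]
  exact (G.isHermitian_adjMatrix ℝ).eigenvalues₀_antitone (Fin.zero_le _)

theorem exists_dotProduct_adjMatrix_mulVec_eq_lam_one [Nonempty V] :
    ∃ x : V → ℝ, x ≠ 0 ∧ x ⬝ᵥ (G.adjMatrix ℝ *ᵥ x) = lam G 1 * (x ⬝ᵥ x) := by
  rw [G.lam_eq_eigenvalues₀ le_rfl Fintype.card_pos, ← IsHermitian.eigenvalues_equivOfCardEq]
  exact IsHermitian.exists_dotProduct_mulVec_eq _ _

theorem lam_one_nonneg [Nonempty V] : 0 ≤ lam G 1 := by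
  obtain ⟨v⟩ := ‹Nonempty V›
  simpa [mulVec_single, Pi.single_apply] using
    G.dotProduct_adjMatrix_mulVec_le_lam_one (Pi.single v 1)

theorem lam_two_le {t : ℝ} (hV : 2 ≤ Fintype.card V) (c : V)
    (h : ∀ x : V → ℝ, x c = 0 → x ⬝ᵥ (G.adjMatrix ℝ *ᵥ x) ≤ t * (x ⬝ᵥ x)) : lam G 2 ≤ t := by
  set hA := G.isHermitian_adjMatrix ℝ
  set σ := Fintype.equivOfCardEq (Fintype.card_fin (Fintype.card V))
  rw [G.lam_eq_eigenvalues₀ one_le_two hV]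
  by_contra! hlt
  have h0 : t < hA.eigenvalues (σ ⟨0, by omega⟩) := by
    rw [hA.eigenvalues_equivOfCardEq]
    exact hlt.trans_le (hA.eigenvalues₀_antitone (Fin.mk_le_mk.mpr zero_le_one))
  have h1 : t < hA.eigenvalues (σ ⟨1, by omega⟩) := by rwa [hA.eigenvalues_equivOfCardEq]
  refine (hA.card_lt_eigenvalues_le_one c h).not_gt (one_lt_card.mpr ?_)
  exact ⟨_, by simpa using h0, _, by simpa using h1, by simp⟩

theorem le_lam_two {t : ℝ} {p q : V → ℝ} (hp : p ≠ 0) (hq : q ≠ 0)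
    (hdisj : ∀ v, p v = 0 ∨ q v = 0) (hsep : ∀ u v, G.Adj u v → p u = 0 ∨ q v = 0)
    (htp : t * (p ⬝ᵥ p) ≤ p ⬝ᵥ (G.adjMatrix ℝ *ᵥ p))
    (htq : t * (q ⬝ᵥ q) ≤ q ⬝ᵥ (G.adjMatrix ℝ *ᵥ q)) : t ≤ lam G 2 := by
  set hA := G.isHermitian_adjMatrix ℝ
  set σ := Fintype.equivOfCardEq (Fintype.card_fin (Fintype.card V))
  have hpq : p ⬝ᵥ q = 0 := sum_eq_zero fun v _ => by rcases hdisj v with h | h <;> simp [h]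
  have hqp : q ⬝ᵥ p = 0 := by rwa [dotProduct_comm]
  have h2 := hA.two_le_card_le_eigenvalues (t := t) hp hq hpq fun α β => by
    rw [dotProduct_adjMatrix_mulVec_add fun u v huv => by
      rcases hsep u v huv with h | h <;> simp [h]]
    simp only [mulVec_smul, dotProduct_smul, smul_dotProduct, add_dotProduct, dotProduct_add,
      hpq, hqp, smul_eq_mul]
    linarith [mul_le_mul_of_nonneg_left htp (sq_nonneg α),
      mul_le_mul_of_nonneg_left htq (sq_nonneg β)]
  have hV : 2 ≤ Fintype.card V := h2.trans (card_filter_le _ _)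
  rw [G.lam_eq_eigenvalues₀ one_le_two hV]
  by_contra! hlt
  have hmem : ∀ i ∈ ({i | t ≤ hA.eigenvalues i} : Finset V), σ.symm i = ⟨0, by omega⟩ := by
    intro i hi
    rw [mem_filter, ← σ.apply_symm_apply i, hA.eigenvalues_equivOfCardEq] at hi
    by_contra hne
    have h1 : (⟨1, by omega⟩ : Fin _) ≤ σ.symm i :=
      Fin.le_def.mpr (Nat.one_le_iff_ne_zero.mpr fun h0 => hne (Fin.ext h0))
    exact (hi.2.trans (hA.eigenvalues₀_antitone h1)).not_gt hlt
  refine h2.not_gt (Nat.lt_succ_of_le (card_le_one.mpr fun i hi j hj => ?_))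
  exact σ.symm.injective ((hmem i hi).trans (hmem j hj).symm)

end Eigenvalues

section InducedSubgraph

variable {V W : Type*} [Fintype V] [Fintype W] [DecidableEq W] [Nonempty W]
  {G : SimpleGraph V} {H : SimpleGraph W}

theorem Embedding.dotProduct_adjMatrix_mulVec_indicator_le (φ : H ↪g G) (x : V → ℝ) :
    (Set.range φ).indicator x ⬝ᵥ (G.adjMatrix ℝ *ᵥ (Set.range φ).indicator x) ≤
      lam H 1 * ((Set.range φ).indicator x ⬝ᵥ (Set.range φ).indicator x) := by
  have h0 : ∀ v ∉ Set.range φ, (Set.range φ).indicator x v = 0 :=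
    fun v hv => Set.indicator_of_notMem hv x
  rw [← φ.dotProduct_adjMatrix_mulVec_comp h0, ← dotProduct_comp_of_injective φ.injective h0]
  exact H.dotProduct_adjMatrix_mulVec_le_lam_one _

theorem Embedding.exists_dotProduct_adjMatrix_mulVec_eq_lam_one (φ : H ↪g G) :
    ∃ x : V → ℝ, x ≠ 0 ∧ (∀ v ∉ Set.range φ, x v = 0) ∧
      x ⬝ᵥ (G.adjMatrix ℝ *ᵥ x) = lam H 1 * (x ⬝ᵥ x) := by
  obtain ⟨y, hy, hyH⟩ := H.exists_dotProduct_adjMatrix_mulVec_eq_lam_one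
  have h0 : ∀ v ∉ Set.range φ, Function.extend φ y 0 v = 0 :=
    fun v hv => Function.extend_apply' _ _ _ hv
  have hcomp : Function.extend φ y 0 ∘ φ = y := funext (φ.injective.extend_apply y 0)
  refine ⟨Function.extend φ y 0, fun hx => hy ?_, h0, ?_⟩
  · rw [← hcomp, hx, Pi.zero_comp]
  · rw [← φ.dotProduct_adjMatrix_mulVec_comp h0, ← dotProduct_comp_of_injective φ.injective h0,
      hcomp, hyH]

end InducedSubgraph

end SimpleGraph

theorem pathG_adj {m : ℕ} {u v : Fin m} :
    (pathG m).Adj u v ↔ u.val + 1 = v.val ∨ v.val + 1 = u.val := by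
  rw [pathG, SimpleGraph.fromRel_adj, Ne, Fin.ext_iff]
  omega

theorem caterpillar_adj {l r k : ℕ} {u v : Fin (l + r + k + 1)} :
    (caterpillar l r k).Adj u v ↔
      (u.val + 1 = v.val ∧ v.val ≤ l + r) ∨ (v.val + 1 = u.val ∧ u.val ≤ l + r) ∨
      (u.val = l ∧ l + r < v.val) ∨ (v.val = l ∧ l + r < u.val) := by
  rw [caterpillar, SimpleGraph.fromRel_adj, Ne, Fin.ext_iff]
  omega

def caterpillarLeft (l r k : ℕ) : pathG l ↪g caterpillar l r k :=
  ⟨Fin.castLEEmb (by omega), by intro i j; simp [caterpillar_adj, pathG_adj]; omega⟩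

/-- `i ↦ v_{l + r - i}`. -/
def caterpillarRight (l r k : ℕ) : pathG r ↪g caterpillar l r k :=
  ⟨(Fin.castLEEmb (show r ≤ l + r + 1 by omega)).trans
      (Fin.revPerm.toEmbedding.trans (Fin.castLEEmb (by omega))),
    by intro i j; simp [caterpillar_adj, pathG_adj]; omega⟩

theorem mem_range_caterpillarLeft {l r k : ℕ} {v : Fin (l + r + k + 1)} :
    v ∈ Set.range (caterpillarLeft l r k) ↔ v.val < l :=
  ⟨by rintro ⟨i, rfl⟩; exact i.isLt, fun h => ⟨⟨v, h⟩, rfl⟩⟩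

theorem mem_range_caterpillarRight {l r k : ℕ} {v : Fin (l + r + k + 1)} :
    v ∈ Set.range (caterpillarRight l r k) ↔ l < v.val ∧ v.val ≤ l + r := by
  constructor
  · rintro ⟨i, rfl⟩
    simp [caterpillarRight]
    omega
  · intro h
    exact ⟨⟨l + r - v, by omega⟩, Fin.ext (by simp [caterpillarRight]; omega)⟩

section Caterpillar

open SimpleGraph

variable {l k : ℕ}

theorem caterpillar_dotProduct_adjMatrix_mulVec_le (hl : 1 ≤ l) (x : Fin (l + l + k + 1) → ℝ)
    (hx : x ⟨l, by omega⟩ = 0) :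
    x ⬝ᵥ ((caterpillar l l k).adjMatrix ℝ *ᵥ x) ≤ lam (pathG l) 1 * (x ⬝ᵥ x) := by
  have : Nonempty (Fin l) := ⟨⟨0, hl⟩⟩
  set L := Set.range (caterpillarLeft l l k)
  set R := Set.range (caterpillarRight l l k)
  set K : Set (Fin (l + l + k + 1)) := {v | l + l < v.val}
  have hsplit : x = L.indicator x + R.indicator x + K.indicator x := by
    funext v
    simp only [Pi.add_apply, Set.indicator_apply, L, R, K, mem_range_caterpillarLeft,
      mem_range_caterpillarRight, Set.mem_ofPred_eq]
    by_cases hv : v.val = l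
    · rw [show v = ⟨l, by omega⟩ from Fin.ext hv, hx]; simp
    · split_ifs <;> first | omega | ring
  have hLR : ∀ u v, (caterpillar l l k).Adj u v → L.indicator x u = 0 ∨ R.indicator x v = 0 := by
    intro u v huv
    rw [caterpillar_adj] at huv
    simp only [Set.indicator_apply, L, R, mem_range_caterpillarLeft, mem_range_caterpillarRight]
    split_ifs <;> first | omega | simp
  have hK : ∀ u v, (caterpillar l l k).Adj u v →
      (L.indicator x + R.indicator x) u = 0 ∨ K.indicator x v = 0 := by
    intro u v huv
    rw [caterpillar_adj] at huv
    simp only [Pi.add_apply, Set.indicator_apply, L, R, K, mem_range_caterpillarLeft,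
      mem_range_caterpillarRight, Set.mem_ofPred_eq]
    split_ifs <;> first | omega | simp
  have hKK : K.indicator x ⬝ᵥ ((caterpillar l l k).adjMatrix ℝ *ᵥ K.indicator x) = 0 := by
    refine dotProduct_adjMatrix_mulVec_eq_zero fun u v huv => ?_
    rw [caterpillar_adj] at huv
    simp only [Set.indicator_apply, K, Set.mem_ofPred_eq]
    split_ifs <;> first | omega | simp
  have hnorm := indicator_dotProduct_add_le (x := x)
    (Set.disjoint_left.mpr fun v hL hR => by
      rw [mem_range_caterpillarLeft] at hL; rw [mem_range_caterpillarRight] at hR; omega)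
  have hL := (caterpillarLeft l l k).dotProduct_adjMatrix_mulVec_indicator_le x
  have hR := (caterpillarRight l l k).dotProduct_adjMatrix_mulVec_indicator_le x
  rw [hsplit, dotProduct_adjMatrix_mulVec_add hK, dotProduct_adjMatrix_mulVec_add hLR, hKK,
    ← hsplit]
  linarith [mul_le_mul_of_nonneg_left hnorm (pathG l).lam_one_nonneg]

theorem lam_pathG_one_le_lam_caterpillar_two (hl : 1 ≤ l) :
    lam (pathG l) 1 ≤ lam (caterpillar l l k) 2 := by
  have : Nonempty (Fin l) := ⟨⟨0, hl⟩⟩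
  obtain ⟨p, hp, hpL, hpp⟩ := (caterpillarLeft l l k).exists_dotProduct_adjMatrix_mulVec_eq_lam_one
  obtain ⟨q, hq, hqR, hqq⟩ :=
    (caterpillarRight l l k).exists_dotProduct_adjMatrix_mulVec_eq_lam_one
  have hpL' : ∀ v, p v ≠ 0 → v.val < l := fun v hv =>
    mem_range_caterpillarLeft.mp (by_contra fun h => hv (hpL v h))
  have hqR' : ∀ v, q v ≠ 0 → l < v.val := fun v hv =>
    (mem_range_caterpillarRight.mp (by_contra fun h => hv (hqR v h))).1
  refine le_lam_two _ hp hq (fun v => ?_) (fun u v huv => ?_) hpp.ge hqq.ge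
  · by_contra! h
    have := hpL' v h.1
    have := hqR' v h.2
    omega
  · by_contra! h
    rw [caterpillar_adj] at huv
    have := hpL' u h.1
    have := hqR' v h.2
    omega

theorem lam_caterpillar_two (hl : 1 ≤ l) : lam (caterpillar l l k) 2 = lam (pathG l) 1 :=
  le_antisymm (lam_two_le _ (by simp; omega) _ (caterpillar_dotProduct_adjMatrix_mulVec_le hl))
    (lam_pathG_one_le_lam_caterpillar_two hl)

end Caterpillar

theorem stmt_15_general (d n : ℕ) (hd : 2 ≤ d) :
    lam (caterpillar (d / 2) (d / 2) (n - d - 1)) 2 = lam (pathG (d / 2)) 1 :=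
  lam_caterpillar_two (by omega)

/-- For even `d ≥ 2` and `n ≥ d + 1`, the caterpillar `C(d/2, d/2, n−d−1)` satisfies
`λ₂ = λ₁(P_{d/2})`. -/
theorem stmt_15 (d n : ℕ) (hd : 2 ≤ d) (he : Even d) (hn : d + 1 ≤ n) :
    lam (caterpillar (d / 2) (d / 2) (n - d - 1)) 2 = lam (pathG (d / 2)) 1 :=
  stmt_15_general d n hd

end
end
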